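/- arXiv:1707.03342 — 5 statements merged into one kernel-verified Lean document; each statement's English description precedes it below -/
import Mathlib

section
/- Let α < 0 < β, 0 < ε < 8/(β−α), and let p < q with ℓ := q − p ≥ ε. Then there exist v ∈ ℝ and a Lipschitz function n : [p,q] → [−1,1] with n(p) = n(q) = 1 and n'(x) = v − g(x/ε) for almost every x ∈ [p,q] if and only if p ∈ ε(1/4 + ℤ) and q ∈ ε(1/4 + ℤ); moreover, in that case necessarily v = (α+β)/2. -/
open MeasureTheory Set

/-- The 1-periodic forcing term: `α` within distance `1/4` of the integers, `β` otherwise. -/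
noncomputable def g (α β x : ℝ) : ℝ := if |x - (round x : ℝ)| ≤ 1/4 then α else β

/-- The edge `[p,q]` with endpoint values `a`, `b` is calibrated with velocity `v` by the
Lipschitz field `n : [p,q] → [-1,1]` satisfying `n' = v - g(·/ε)` a.e. on `[p,q]`. -/
def Calibrates (α β ε p q a b v : ℝ) (n : ℝ → ℝ) : Prop :=
  (∃ K : NNReal, LipschitzOnWith K n (Icc p q)) ∧
  (∀ x ∈ Icc p q, n x ∈ Icc (-1 : ℝ) 1) ∧
  n p = a ∧ n q = b ∧
  ∀ᵐ x ∂(volume.restrict (Icc p q)), HasDerivAt n (v - g α β (x / ε)) x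

/-!
Write `m = (α + β) / 2`. The function `sawtooth α β ε`, equal to `-(β - α) / 2` times the distance
from `x - ε / 4` to `εℤ`, is Lipschitz with derivative `m - g(x / ε)` off the countable set
`ε(1/4 + ℤ/2)`. By the fundamental theorem of calculus for absolutely continuous functions, any
calibration of `[p,q]` with values `1, 1` and velocity `v` is therefore
`n x = 1 + (v - m)(x - p) + S x - S p`, where `S = sawtooth α β ε`. As `S` is `ε`-periodic and
`q - p ≥ ε`, the constraint `n ≤ 1` at `p + ε` and at `q - ε` forces `v = m`. Then `n ≤ 1` on a
full period forces `S p = max S = 0`, and `n q = 1` gives `S q = 0`: both endpoints lie in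
`ε(1/4 + ℤ)`, the zero set of `S`. Conversely `1 + S` calibrates such an edge, and takes values
in `[-1, 1]` because `ε (β - α) < 8`.
-/

lemma lipschitzWith_abs_sub_round : LipschitzWith 1 fun y : ℝ => |y - round y| := by
  have key : ∀ s t : ℝ, |s - round s| - |t - round t| ≤ |s - t| := fun s t =>
    calc |s - round s| - |t - round t| ≤ |s - round t| - |t - round t| :=
          sub_le_sub_right (round_le s _) _
      _ ≤ |(s - round t) - (t - round t)| := abs_sub_abs_le_abs_sub _ _
      _ = |s - t| := by ring_nf
  refine LipschitzWith.of_dist_le_mul fun s t => ?_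
  rw [NNReal.coe_one, one_mul, Real.dist_eq, Real.dist_eq, abs_sub_le_iff]
  exact ⟨key s t, (key t s).trans_eq (abs_sub_comm t s)⟩

lemma round_eq_of_abs_sub_round_lt {y z : ℝ} (h : |z - round y| < 1 / 2) : round z = round y := by
  rw [round_eq_iff]
  obtain ⟨h₁, h₂⟩ := abs_lt.1 h
  constructor <;> linarith

lemma hasDerivAt_abs_sub_round {y : ℝ} (hy : |y - round y| ∈ Ioo 0 (1 / 2)) :
    HasDerivAt (fun z : ℝ => |z - round z|) (SignType.sign (y - round y) : ℝ) y := by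
  have hround : ∀ᶠ z : ℝ in nhds y, |z - round z| = |z - round y| := by
    have hopen : IsOpen {z : ℝ | |z - round y| < 1 / 2} :=
      isOpen_lt (continuous_id.sub continuous_const).abs continuous_const
    filter_upwards [hopen.mem_nhds hy.2] with z hz
    rw [round_eq_of_abs_sub_round_lt hz]
  have hne : y - round y ≠ 0 := abs_pos.1 hy.1
  have hderiv :
      HasDerivAt (fun z : ℝ => |z - round y|) (SignType.sign (y - round y) : ℝ) y := by
    exact ((hasDerivAt_abs hne).comp y ((hasDerivAt_id' y).sub_const _)).congr_deriv (mul_one _)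
  exact hderiv.congr_of_eventuallyEq hround

lemma countable_setOf_abs_sub_round_notMem_Ioo :
    {y : ℝ | |y - round y| ∉ Ioo 0 (1 / 2)}.Countable := by
  refine (countable_range fun k : ℤ => (k : ℝ) / 2).mono fun y hy => ?_
  have hle := abs_sub_round y
  have hcases : |y - round y| = 0 ∨ |y - round y| = 1 / 2 := by
    simp only [mem_ofPred_eq, mem_Ioo, not_and_or, not_lt] at hy
    rcases hy with h | h
    · exact Or.inl (le_antisymm h (abs_nonneg _))
    · exact Or.inr (le_antisymm hle h)
  rcases hcases with h | h
  · exact ⟨2 * round y, by push_cast; linarith [abs_eq_zero.1 h]⟩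
  · rcases abs_eq (by norm_num : (0 : ℝ) ≤ 1 / 2) |>.1 h with h' | h'
    · exact ⟨2 * round y + 1, by push_cast; linarith⟩
    · exact ⟨2 * round y - 1, by push_cast; linarith⟩

lemma g_eq_alpha_of_abs_sub_intCast_le {α β x : ℝ} {k : ℤ} (h : |x - k| ≤ 1 / 4) :
    g α β x = α := by
  obtain ⟨h₁, h₂⟩ := abs_le.1 h
  have hround : round x = k := round_eq_iff.2 ⟨by linarith, by linarith⟩
  rw [g, hround, if_pos h]

lemma g_eq_beta_of_mem_Ioo {α β x : ℝ} {k : ℤ} (h : x ∈ Ioo ((k : ℝ) + 1 / 4) (k + 3 / 4)) :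
    g α β x = β := by
  rw [g, if_neg]
  intro hle
  obtain ⟨h₁, h₂⟩ := abs_le.1 hle
  have hlt : (round x : ℝ) < k + 1 := by linarith [h.2]
  have hgt : (k : ℝ) < round x := by linarith [h.1]
  have : round x < k + 1 := by exact_mod_cast hlt
  have : k < round x := by exact_mod_cast hgt
  omega

lemma g_add_quarter {α β y : ℝ} (hy : |y - round y| ∈ Ioo 0 (1 / 2)) :
    g α β (y + 1 / 4) = (α + β) / 2 + (β - α) / 2 * SignType.sign (y - round y) := by
  obtain ⟨h₀, h₁⟩ := hy
  rcases lt_or_gt_of_ne (abs_pos.1 h₀) with hneg | hpos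
  · rw [abs_of_neg hneg] at h₁
    rw [g_eq_alpha_of_abs_sub_intCast_le (k := round y) (abs_le.2 ⟨by linarith, by linarith⟩),
      sign_neg hneg]
    simp only [SignType.coe_neg, SignType.coe_one]
    ring
  · rw [abs_of_pos hpos] at h₁
    rw [g_eq_beta_of_mem_Ioo (k := round y) ⟨by linarith, by linarith⟩, sign_pos hpos]
    simp only [SignType.coe_one]
    ring

noncomputable def sawtooth (α β ε x : ℝ) : ℝ :=
  -((β - α) / 2 * ε) * |x / ε - 1 / 4 - round (x / ε - 1 / 4)|

section Sawtooth

variable {α β ε : ℝ}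

lemma sawtooth_add_period (hε : ε ≠ 0) (x : ℝ) : sawtooth α β ε (x + ε) = sawtooth α β ε x := by
  have hshift : (x + ε) / ε - 1 / 4 = (x / ε - 1 / 4) + (1 : ℤ) := by
    field_simp; push_cast; ring
  rw [sawtooth, sawtooth, hshift, round_add_intCast]
  push_cast
  ring_nf

lemma sawtooth_nonpos (hαβ : α ≤ β) (hε : 0 ≤ ε) (x : ℝ) : sawtooth α β ε x ≤ 0 := by
  have : 0 ≤ (β - α) / 2 * ε := by nlinarith
  exact mul_nonpos_of_nonpos_of_nonneg (neg_nonpos.2 this) (abs_nonneg _)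

lemma neg_le_sawtooth (hαβ : α ≤ β) (hε : 0 ≤ ε) (x : ℝ) :
    -((β - α) * ε / 4) ≤ sawtooth α β ε x := by
  have hc : 0 ≤ (β - α) / 2 * ε := by nlinarith
  have := mul_le_mul_of_nonneg_left (abs_sub_round (x / ε - 1 / 4)) hc
  rw [sawtooth]
  linarith

lemma sawtooth_eq_zero_iff (hαβ : α < β) (hε : ε ≠ 0) {x : ℝ} :
    sawtooth α β ε x = 0 ↔ ∃ k : ℤ, x = ε * (1 / 4 + k) := by
  have hc : -((β - α) / 2 * ε) ≠ 0 :=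
    neg_ne_zero.2 (mul_ne_zero (div_ne_zero (sub_ne_zero.2 hαβ.ne') two_ne_zero) hε)
  rw [sawtooth, mul_eq_zero, or_iff_right hc, abs_eq_zero, sub_eq_zero]
  constructor
  · intro h
    exact ⟨round (x / ε - 1 / 4), by rw [← h]; field_simp; ring⟩
  · rintro ⟨k, rfl⟩
    have : ε * (1 / 4 + k) / ε - 1 / 4 = k := by field_simp; ring
    rw [this, round_intCast]

lemma exists_quarter_add_int_mem_Icc (hε : 0 < ε) (x : ℝ) :
    ∃ k : ℤ, ε * (1 / 4 + k) ∈ Icc x (x + ε) := by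
  have hx : ε * (x / ε) = x := mul_div_cancel₀ x hε.ne'
  refine ⟨⌈x / ε - 1 / 4⌉, ?_, ?_⟩
  · nlinarith [mul_le_mul_of_nonneg_left (Int.le_ceil (x / ε - 1 / 4)) hε.le]
  · nlinarith [mul_lt_mul_of_pos_left (Int.ceil_lt_add_one (x / ε - 1 / 4)) hε]

lemma lipschitzWith_sawtooth (hε : ε ≠ 0) :
    LipschitzWith ‖(β - α) / 2‖₊ (sawtooth α β ε) := by
  refine LipschitzWith.of_dist_le_mul fun x y => ?_
  have hT := lipschitzWith_abs_sub_round.dist_le_mul (x / ε - 1 / 4) (y / ε - 1 / 4)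
  rw [NNReal.coe_one, one_mul, Real.dist_eq, Real.dist_eq,
    show x / ε - 1 / 4 - (y / ε - 1 / 4) = (x - y) / ε by ring, abs_div] at hT
  rw [Real.dist_eq, Real.dist_eq, coe_nnnorm, Real.norm_eq_abs, sawtooth, sawtooth, ← mul_sub,
    abs_mul, abs_neg, abs_mul]
  calc |(β - α) / 2| * |ε| * |_ - _| ≤ |(β - α) / 2| * |ε| * (|x - y| / |ε|) := by gcongr
    _ = |(β - α) / 2| * |x - y| := by field_simp

lemma hasDerivAt_sawtooth (hε : ε ≠ 0) {x : ℝ}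
    (hx : |x / ε - 1 / 4 - round (x / ε - 1 / 4)| ∈ Ioo 0 (1 / 2)) :
    HasDerivAt (sawtooth α β ε) ((α + β) / 2 - g α β (x / ε)) x := by
  have hinner : HasDerivAt (fun x => x / ε - 1 / 4) (1 / ε) x := by
    simpa using ((hasDerivAt_id x).div_const ε).sub_const (1 / 4)
  have := ((hasDerivAt_abs_sub_round hx).comp x hinner).const_mul (-((β - α) / 2 * ε))
  refine (this.congr_deriv ?_ : HasDerivAt (sawtooth α β ε) _ x)
  have hg := g_add_quarter (α := α) (β := β) hx
  rw [sub_add_cancel] at hg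
  rw [hg]
  field_simp
  ring

lemma ae_hasDerivAt_sawtooth (hε : ε ≠ 0) :
    ∀ᵐ x, HasDerivAt (sawtooth α β ε) ((α + β) / 2 - g α β (x / ε)) x := by
  have hinj : Function.Injective fun x : ℝ => x / ε - 1 / 4 := fun x y h => by
    simpa [div_left_inj' hε] using h
  filter_upwards [(countable_setOf_abs_sub_round_notMem_Ioo.preimage hinj).ae_notMem volume]
    with x hx
  exact hasDerivAt_sawtooth hε (not_not.1 hx)

end Sawtooth

theorem AbsolutelyContinuousOnInterval.sub_eq_sub_of_ae_hasDerivAt {f g f' : ℝ → ℝ} {a b : ℝ}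
    (hf : AbsolutelyContinuousOnInterval f a b) (hg : AbsolutelyContinuousOnInterval g a b)
    (hf' : ∀ᵐ x, x ∈ uIcc a b → HasDerivAt f (f' x) x)
    (hg' : ∀ᵐ x, x ∈ uIcc a b → HasDerivAt g (f' x) x) :
    ∀ x ∈ uIcc a b, f x - g x = f a - g a := by
  obtain ⟨C, hC⟩ := (hf.fun_sub hg).const_of_ae_hasDerivAt_zero <| by
    filter_upwards [hf', hg'] with x hfx hgx hx
    have := (hfx hx).sub (hgx hx)
    rwa [sub_self] at this
  intro x hx
  rw [hC x hx, hC a left_mem_uIcc]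

namespace Calibrates

variable {α β ε p q a b v : ℝ} {n : ℝ → ℝ}

theorem eq_add_sawtooth (hε : ε ≠ 0) (hpq : p ≤ q) (hcal : Calibrates α β ε p q a b v n) :
    ∀ x ∈ Icc p q,
      n x = a + (v - (α + β) / 2) * (x - p) + (sawtooth α β ε x - sawtooth α β ε p) := by
  obtain ⟨⟨K, hK⟩, -, hnp, -, hn'⟩ := hcal
  set G : ℝ → ℝ := fun x => (v - (α + β) / 2) * (x - p) + sawtooth α β ε x
  have hG : AbsolutelyContinuousOnInterval G p q :=
    (ContDiffOn.absolutelyContinuousOnInterval (by fun_prop)).fun_add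
      (lipschitzWith_sawtooth hε).lipschitzOnWith.absolutelyContinuousOnInterval
  have hG' : ∀ᵐ x, x ∈ uIcc p q → HasDerivAt G (v - g α β (x / ε)) x := by
    filter_upwards [ae_hasDerivAt_sawtooth (α := α) (β := β) hε] with x hx _
    have := (((hasDerivAt_id x).sub_const p).const_mul (v - (α + β) / 2)).add hx
    exact this.congr_deriv (by ring)
  rw [← uIcc_of_le hpq] at hK hn' ⊢
  have hn'' := (ae_restrict_iff' measurableSet_uIcc).1 hn'
  intro x hx
  have := hK.absolutelyContinuousOnInterval.sub_eq_sub_of_ae_hasDerivAt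
    hG hn'' hG' x hx
  simp only [G, sub_self, mul_zero, zero_add, hnp] at this
  linarith

theorem velocity_eq (hε : 0 < ε) (hl : ε ≤ q - p) (hcal : Calibrates α β ε p q 1 1 v n) :
    v = (α + β) / 2 := by
  have hpq : p ≤ q := by linarith
  have hn := hcal.eq_add_sawtooth hε.ne' hpq
  obtain ⟨-, hrange, -, hnq, -⟩ := hcal
  have hper₁ := sawtooth_add_period (α := α) (β := β) hε.ne' p
  have hper₂ := sawtooth_add_period (α := α) (β := β) hε.ne' (q - ε)
  rw [sub_add_cancel] at hper₂
  have hle₁ := (hrange (p + ε) ⟨by linarith, by linarith⟩).2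
  have hle₂ := (hrange (q - ε) ⟨by linarith, by linarith⟩).2
  rw [hn _ ⟨by linarith, by linarith⟩, hper₁] at hle₁
  rw [hn _ ⟨by linarith, by linarith⟩] at hle₂
  have hnq' := hn q ⟨hpq, le_rfl⟩
  rw [hnq, hper₂] at hnq'
  have : (v - (α + β) / 2) * ε = 0 := by linarith
  linarith [(mul_eq_zero.1 this).resolve_right hε.ne']

theorem endpoints_eq_quarter_add_int (hαβ : α < β) (hε : 0 < ε) (hl : ε ≤ q - p)
    (hcal : Calibrates α β ε p q 1 1 v n) :
    (∃ k : ℤ, p = ε * (1 / 4 + k)) ∧ (∃ k : ℤ, q = ε * (1 / 4 + k)) := by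
  have hpq : p ≤ q := by linarith
  have hn := hcal.eq_add_sawtooth hε.ne' hpq
  rw [hcal.velocity_eq hε hl, sub_self] at hn
  obtain ⟨-, hrange, -, hnq, -⟩ := hcal
  obtain ⟨k, hkp, hkε⟩ := exists_quarter_add_int_mem_Icc hε p
  have hk : ε * (1 / 4 + k) ∈ Icc p q := ⟨hkp, hkε.trans (by linarith)⟩
  have hle := (hrange _ hk).2
  rw [hn _ hk, (sawtooth_eq_zero_iff hαβ hε.ne').2 ⟨k, rfl⟩] at hle
  have hp : sawtooth α β ε p = 0 :=
    le_antisymm (sawtooth_nonpos hαβ.le hε.le p) (by linarith)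
  have hq := hn q ⟨hpq, le_rfl⟩
  rw [hnq, hp] at hq
  exact ⟨(sawtooth_eq_zero_iff hαβ hε.ne').1 hp, (sawtooth_eq_zero_iff hαβ hε.ne').1 (by linarith)⟩

end Calibrates

theorem calibrates_one_add_sawtooth {α β ε p q : ℝ} (hαβ : α ≤ β) (hε : 0 < ε)
    (hεβα : ε * (β - α) ≤ 8) (hp : sawtooth α β ε p = 0) (hq : sawtooth α β ε q = 0) :
    Calibrates α β ε p q 1 1 ((α + β) / 2) fun x => 1 + sawtooth α β ε x := by
  refine ⟨⟨_, ((LipschitzWith.const 1).add (lipschitzWith_sawtooth hε.ne')).lipschitzOnWith⟩,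
    fun x _ => ⟨?_, ?_⟩, by simp [hp], by simp [hq], ae_restrict_of_ae ?_⟩
  · linarith [neg_le_sawtooth hαβ hε.le x]
  · linarith [sawtooth_nonpos hαβ hε.le x]
  · filter_upwards [ae_hasDerivAt_sawtooth hε.ne'] with x hx
    exact hx.const_add 1

theorem stmt0_general (α β ε p q : ℝ) (hα : α < 0) (hβ : 0 < β)
    (hε0 : 0 < ε) (hε : ε < 8 / (β - α)) (hl : ε ≤ q - p) :
    ((∃ v : ℝ, ∃ n : ℝ → ℝ, Calibrates α β ε p q 1 1 v n) ↔
      ((∃ k : ℤ, p = ε * (1/4 + k)) ∧ (∃ k : ℤ, q = ε * (1/4 + k)))) ∧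
    (∀ v : ℝ, ∀ n : ℝ → ℝ, Calibrates α β ε p q 1 1 v n → v = (α + β) / 2) := by
  have hαβ : α < β := hα.trans hβ
  have hεβα : ε * (β - α) ≤ 8 := ((lt_div_iff₀ (sub_pos.2 hαβ)).1 hε).le
  refine ⟨⟨fun ⟨_, _, hcal⟩ => hcal.endpoints_eq_quarter_add_int hαβ hε0 hl, fun ⟨hp, hq⟩ => ?_⟩,
    fun _ _ hcal => hcal.velocity_eq hε0 hl⟩
  exact ⟨_, _, calibrates_one_add_sawtooth hαβ.le hε0 hεβα
    ((sawtooth_eq_zero_iff hαβ hε0.ne').2 hp) ((sawtooth_eq_zero_iff hαβ hε0.ne').2 hq)⟩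

theorem stmt0 (α β ε p q : ℝ) (hα : α < 0) (hβ : 0 < β)
    (hε0 : 0 < ε) (hε : ε < 8 / (β - α)) (hpq : p < q) (hl : ε ≤ q - p) :
    ((∃ v : ℝ, ∃ n : ℝ → ℝ, Calibrates α β ε p q 1 1 v n) ↔
      ((∃ k : ℤ, p = ε * (1/4 + k)) ∧ (∃ k : ℤ, q = ε * (1/4 + k)))) ∧
    (∀ v : ℝ, ∀ n : ℝ → ℝ, Calibrates α β ε p q 1 1 v n → v = (α + β) / 2) :=
  stmt0_general α β ε p q hα hβ hε0 hε hl
end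

section
/- Let α < 0 < β, ε > 0, and let p < q with ℓ := q − p, and let ℓ_α, ℓ_β ∈ [0, ε/2] be the phase lengths of [p,q]. Assume ℓ + ℓ_α − ℓ_β ≤ 4/(β−α), and set v := 2/ℓ + (1/ℓ)∫_p^q g(s/ε) ds. Then the function n(x) := −1 + ∫_p^x (v − g(s/ε)) ds is nondecreasing on [p,q], satisfies n(q) = 1, and −1 ≤ n(x) ≤ 1 for every x ∈ [p,q]; in particular the edge [p,q] with endpoint values n(p) = −1, n(q) = 1 (a convex horizontal edge) is calibrable with velocity v. -/
open MeasureTheory Set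

/- Since `v - g(·/ε)` lies in `[v - β, v - α]`, the field `n` is a Lipschitz primitive, and the
Lebesgue differentiation theorem gives `n' = v - g(·/ε)` almost everywhere. The choice of `v`
makes `n(q) - n(p) = 2`, and the hypothesis `ℓ + ℓ_α - ℓ_β ≤ 4/(β - α)` is exactly `β ≤ v`, so `n`
is nondecreasing and hence stays between `n(p) = -1` and `n(q) = 1`. -/

theorem measurable_g (α β : ℝ) : Measurable (g α β) := by
  have hround : Measurable fun x : ℝ => (round x : ℝ) := by
    simp only [round_eq]
    exact measurable_from_top.comp (measurable_id.add_const _).floor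
  exact Measurable.ite (measurableSet_le (measurable_id.sub hround).abs measurable_const)
    measurable_const measurable_const

theorem g_mem_Icc {α β : ℝ} (hαβ : α ≤ β) (x : ℝ) : g α β x ∈ Icc α β := by
  unfold g
  split_ifs
  exacts [left_mem_Icc.2 hαβ, right_mem_Icc.2 hαβ]

theorem locallyIntegrable_of_norm_le {X E : Type*} [TopologicalSpace X] [MeasurableSpace X]
    [NormedAddCommGroup E] {μ : Measure X} [IsLocallyFiniteMeasure μ] {f : X → E}
    (hf : AEStronglyMeasurable f μ) {C : ℝ} (hC : ∀ x, ‖f x‖ ≤ C) : LocallyIntegrable f μ :=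
  fun x ↦
    let ⟨s, hs, hμs⟩ := μ.finiteAt_nhds x
    ⟨s, hs, Measure.integrableOn_of_bounded hμs.ne hf (ae_of_all _ hC)⟩

theorem locallyIntegrable_g_comp_div (α β ε : ℝ) :
    LocallyIntegrable (fun s ↦ g α β (s / ε)) volume := by
  refine locallyIntegrable_of_norm_le
    ((measurable_g α β).comp (measurable_id.div_const ε)).aestronglyMeasurable
    (C := max |α| |β|) fun x ↦ ?_
  unfold g
  split_ifs
  exacts [le_max_left _ _, le_max_right _ _]

theorem MeasureTheory.LocallyIntegrable.intervalIntegrable {E : Type*} [NormedAddCommGroup E]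
    {f : ℝ → E} (hf : LocallyIntegrable f volume) (a b : ℝ) : IntervalIntegrable f volume a b :=
  (hf.integrableOn_isCompact isCompact_uIcc).intervalIntegrable

section Primitive

variable {f : ℝ → ℝ} (c p : ℝ)

theorem monotone_const_add_primitive (hf : LocallyIntegrable f volume) (hf0 : ∀ x, 0 ≤ f x) :
    Monotone fun x ↦ c + ∫ s in p..x, f s := by
  intro x y hxy
  have hsub := intervalIntegral.integral_interval_sub_left
    (hf.intervalIntegrable p y) (hf.intervalIntegrable p x)
  have := intervalIntegral.integral_nonneg (μ := volume) hxy fun u _ ↦ hf0 u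
  show c + _ ≤ c + _
  linarith

theorem lipschitzWith_const_add_primitive (hf : LocallyIntegrable f volume) {C : NNReal}
    (hC : ∀ x, ‖f x‖ ≤ C) : LipschitzWith C fun x ↦ c + ∫ s in p..x, f s := by
  refine LipschitzWith.of_dist_le_mul fun x y ↦ ?_
  rw [dist_add_left, dist_eq_norm, intervalIntegral.integral_interval_sub_left
    (hf.intervalIntegrable p x) (hf.intervalIntegrable p y), Real.dist_eq]
  exact intervalIntegral.norm_integral_le_of_norm_le_const fun u _ ↦ hC u

theorem ae_hasDerivAt_const_add_primitive (hf : LocallyIntegrable f volume) :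
    ∀ᵐ x, HasDerivAt (fun x ↦ c + ∫ s in p..x, f s) (f x) x := by
  filter_upwards [LocallyIntegrable.ae_hasDerivAt_integral hf] with x hx
  exact (hx p).const_add c

end Primitive

theorem le_velocity {α β ℓ lα lβ v : ℝ} (hαβ : α < β) (hℓ : 0 < ℓ)
    (hcond : ℓ + lα - lβ ≤ 4 / (β - α))
    (hv : v = 2 / ℓ + 1 / ℓ * ((α + β) / 2 * (ℓ - lα - lβ) + α * lα + β * lβ)) : β ≤ v := by
  have h4 : (ℓ + lα - lβ) * (β - α) ≤ 4 := (le_div_iff₀ (sub_pos.2 hαβ)).1 hcond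
  have hgap : v * ℓ - β * ℓ = 2 - (ℓ + lα - lβ) * (β - α) / 2 := by
    rw [hv]; field_simp; ring
  refine le_of_mul_le_mul_right ?_ hℓ
  linarith

theorem stmt2_general (α β ε p q lα lβ v : ℝ) (hα : α < 0) (hβ : 0 < β)
    (hpq : p < q)
    (hint : ∫ s in p..q, g α β (s / ε)
      = (α + β) / 2 * ((q - p) - lα - lβ) + α * lα + β * lβ)
    (hcond : (q - p) + lα - lβ ≤ 4 / (β - α))
    (hv : v = 2 / (q - p) + (1 / (q - p)) * ∫ s in p..q, g α β (s / ε))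
    (n : ℝ → ℝ) (hn : n = fun x => -1 + ∫ s in p..x, (v - g α β (s / ε))) :
    MonotoneOn n (Icc p q) ∧ n q = 1 ∧ (∀ x ∈ Icc p q, -1 ≤ n x ∧ n x ≤ 1) ∧
    Calibrates α β ε p q (-1) 1 v n := by
  have hαβ : α < β := hα.trans hβ
  have hβv : β ≤ v := le_velocity hαβ (sub_pos.2 hpq) hcond (hint ▸ hv)
  have hg := locallyIntegrable_g_comp_div α β ε
  have hf : LocallyIntegrable (fun s ↦ v - g α β (s / ε)) volume :=
    (locallyIntegrable_const v).sub hg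
  have hf_mem (s : ℝ) : v - g α β (s / ε) ∈ Icc 0 (v - α) := by
    obtain ⟨h₁, h₂⟩ := g_mem_Icc hαβ.le (s / ε)
    constructor <;> linarith
  have hnp : n p = -1 := by simp [hn]
  have hnq : n q = 1 := by
    simp only [hn]
    rw [intervalIntegral.integral_sub intervalIntegrable_const
      (hg.intervalIntegrable p q), hv]
    simp only [intervalIntegral.integral_const, smul_eq_mul]
    field_simp [(sub_pos.2 hpq).ne']
    ring
  have hmono : Monotone n := hn ▸ monotone_const_add_primitive (-1) p hf fun s ↦ (hf_mem s).1
  have hbd (x : ℝ) (hx : x ∈ Icc p q) : -1 ≤ n x ∧ n x ≤ 1 :=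
    ⟨hnp.symm.trans_le (hmono hx.1), (hmono hx.2).trans_eq hnq⟩
  have hlip : LipschitzWith (v - α).toNNReal n :=
    hn ▸ lipschitzWith_const_add_primitive (-1) p hf fun s ↦ by
      rw [Real.norm_of_nonneg (hf_mem s).1, Real.coe_toNNReal _ (by linarith)]
      exact (hf_mem s).2
  exact ⟨hmono.monotoneOn _, hnq, hbd, ⟨_, hlip.lipschitzOnWith⟩, hbd, hnp, hnq,
    ae_restrict_of_ae (hn ▸ ae_hasDerivAt_const_add_primitive (-1) p hf)⟩

theorem stmt2 (α β ε p q lα lβ v : ℝ) (hα : α < 0) (hβ : 0 < β) (hε0 : 0 < ε)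
    (hpq : p < q)
    (hlα0 : 0 ≤ lα) (hlα1 : lα ≤ ε / 2) (hlβ0 : 0 ≤ lβ) (hlβ1 : lβ ≤ ε / 2)
    (hsum : lα + lβ = (q - p) - ε * (⌊(q - p) / ε⌋ : ℝ))
    (hint : ∫ s in p..q, g α β (s / ε)
      = (α + β) / 2 * ((q - p) - lα - lβ) + α * lα + β * lβ)
    (hcond : (q - p) + lα - lβ ≤ 4 / (β - α))
    (hv : v = 2 / (q - p) + (1 / (q - p)) * ∫ s in p..q, g α β (s / ε))
    (n : ℝ → ℝ) (hn : n = fun x => -1 + ∫ s in p..x, (v - g α β (s / ε))) :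
    MonotoneOn n (Icc p q) ∧ n q = 1 ∧ (∀ x ∈ Icc p q, -1 ≤ n x ∧ n x ≤ 1) ∧
    Calibrates α β ε p q (-1) 1 v n :=
  stmt2_general α β ε p q lα lβ v hα hβ hpq hint hcond hv n hn
end

section
/- Let α < 0 < β, 0 < ε < 8/(β−α), and let k₁, k ∈ ℤ and p, q ∈ ℝ with ε(k₁ − 1/4) < p < ε(k₁ + 1/4) (so p lies in the open α-phase of g_ε) and q = ε(k + 1/4) with q > ε(k₁ + 3/4). Set ℓ := q − p, σ := ε(k₁ + 1/4) − p ∈ (0, ε/2), ℓ* := q − ε(k₁ + 3/4), σ* := (ε/2)·((β−α)(ℓ* + ε/2) − 4)/((β−α)(ℓ* − ε/2) + 4), and v := 2/ℓ + (α+β)/2 − ((β−α)/(2ℓ))σ, and assume (β−α)(ℓ* + ε/2 + 2σ) > 4. Then there exists a Lipschitz function n : [p,q] → [−1,1] with n(p) = −1, n(q) = 1 and n'(x) = v − g(x/ε) for almost every x ∈ [p,q] if and only if σ ≥ σ*. -/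
/-!
A calibration is Lipschitz, hence absolutely continuous, so it agrees on `[p, q]` with the
explicit antiderivative `n₀ x = -1 + ∫_p^x (v - g(t/ε)) dt`: a calibration exists iff
`n₀ q = 1`, which is what the choice of `v` achieves, and `n₀` stays in `[-1, 1]`.
Since `v` exceeds the mean `(α + β)/2` of `g`, `n₀` grows on average, and as `q` lies on an
interface `n₀ ≤ n₀ q = 1`. Being increasing on the α-phases and of average slope `> 0` over
each period, `n₀` can drop below `-1` only at the end `ε (k₁ + 3/4)` of the first β-phase,
where it equals `-1 + (v - α) σ + (v - β) ε / 2`; this is nonnegative exactly when `σ* ≤ σ`.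
-/

open MeasureTheory Set

/-- The distance from `t` to `1/4 + ℤ`: `g α β` is `α` where it decreases and `β` where it
increases. -/
noncomputable def triangleWave (t : ℝ) : ℝ := |t - 1/4 - round (t - 1/4)|

lemma triangleWave_nonneg (t : ℝ) : 0 ≤ triangleWave t := abs_nonneg _

lemma triangleWave_le_half (t : ℝ) : triangleWave t ≤ 1/2 := abs_sub_round _

lemma lipschitzWith_triangleWave : LipschitzWith 1 triangleWave := by
  refine LipschitzWith.of_le_add fun s t => ?_
  calc triangleWave s ≤ |s - 1/4 - round (t - 1/4)| := round_le _ _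
    _ = |(t - 1/4 - round (t - 1/4)) + (s - t)| := by ring_nf
    _ ≤ triangleWave t + dist s t := abs_add_le _ _

lemma triangleWave_eq_of_mem_Ico {m : ℤ} {t : ℝ} (ht : t ∈ Ico ((m : ℝ) - 1/4) (m + 3/4)) :
    triangleWave t = |t - (m + 1/4)| := by
  have : round (t - 1/4) = m := by
    rw [round_eq, Int.floor_eq_iff]
    constructor <;> linarith [ht.1, ht.2]
  rw [triangleWave, this, sub_sub, add_comm]

lemma triangleWave_eq_of_mem_Icc {m : ℤ} {t : ℝ} (ht : t ∈ Icc ((m : ℝ) - 1/4) (m + 3/4)) :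
    triangleWave t = |t - (m + 1/4)| := by
  rcases ht.2.lt_or_eq with h | rfl
  · exact triangleWave_eq_of_mem_Ico ⟨ht.1, h⟩
  · rw [triangleWave_eq_of_mem_Ico (m := m + 1) (by push_cast; constructor <;> linarith),
      show (m : ℝ) + 3/4 - ((m + 1 : ℤ) + 1/4) = -(1/2) by push_cast; ring,
      show (m : ℝ) + 3/4 - (m + 1/4) = 1/2 by ring]
    norm_num

lemma g_eq_alpha_of_mem_Icc {α β t : ℝ} (m : ℤ) (ht : t ∈ Icc ((m : ℝ) - 1/4) (m + 1/4)) : g α β t = α := by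
  rw [g, if_pos ((round_le t m).trans (abs_le.2 ⟨by linarith [ht.1], by linarith [ht.2]⟩))]

lemma g_eq_beta_of_mem_Ioo_s11 {α β t : ℝ} (m : ℤ) (ht : t ∈ Ioo ((m : ℝ) + 1/4) (m + 3/4)) : g α β t = β := by
  rw [g, if_neg]
  intro hc
  obtain ⟨hc1, hc2⟩ := abs_le.mp hc
  rcases le_or_gt (round t) m with h | h
  · have : ((round t : ℤ) : ℝ) ≤ m := by exact_mod_cast h
    linarith [ht.1]
  · have : (m : ℝ) + 1 ≤ (round t : ℝ) := by exact_mod_cast h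
    linarith [ht.2]

noncomputable def gPrimitive (α β t : ℝ) : ℝ := (α + β) / 2 * t + (β - α) / 2 * triangleWave t

lemma lipschitzWith_gPrimitive (α β : ℝ) :
    LipschitzWith (‖(α + β) / 2‖₊ + ‖(β - α) / 2‖₊) (gPrimitive α β) := by
  have h := (lipschitzWith_smul ((α + β) / 2)).add
    ((lipschitzWith_smul ((β - α) / 2)).comp lipschitzWith_triangleWave)
  rwa [mul_one] at h

lemma hasDerivAt_gPrimitive (α β : ℝ) {t : ℝ} (ht : t ∉ range fun m : ℤ => (m : ℝ) / 2 + 1/4) :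
    HasDerivAt (gPrimitive α β) (g α β t) t := by
  set m := ⌊t + 1/4⌋
  have hm₁ : (m : ℝ) - 1/4 ≤ t := by linarith [Int.floor_le (t + 1/4)]
  have hm₂ : t < m + 3/4 := by linarith [Int.lt_floor_add_one (t + 1/4)]
  have hne₁ : (m : ℝ) - 1/4 ≠ t := fun h => ht ⟨2 * m - 1, by push_cast; linarith⟩
  have hne₂ : t ≠ m + 1/4 := fun h => ht ⟨2 * m, by push_cast; linarith⟩
  have hloc : (fun s => (α + β) / 2 * s + (β - α) / 2 * |s - (m + 1/4)|) =ᶠ[nhds t]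
      gPrimitive α β := by
    filter_upwards [Ioo_mem_nhds (hm₁.lt_of_ne hne₁) hm₂] with s hs
    rw [gPrimitive, triangleWave_eq_of_mem_Ico (Ioo_subset_Ico_self hs)]
  refine HasDerivAt.congr_of_eventuallyEq ?_ hloc.symm
  have hlin := (hasDerivAt_id t).const_mul ((α + β) / 2)
  rcases hne₂.lt_or_gt with h | h
  · have habs := (hasDerivAt_abs_neg (sub_neg.2 h)).comp t ((hasDerivAt_id t).sub_const _)
    rw [g_eq_alpha_of_mem_Icc m ⟨hm₁, h.le⟩]
    exact (hlin.add (habs.const_mul ((β - α) / 2))).congr_deriv (by ring)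
  · have habs := (hasDerivAt_abs_pos (sub_pos.2 h)).comp t ((hasDerivAt_id t).sub_const _)
    rw [g_eq_beta_of_mem_Ioo_s11 m ⟨h, hm₂⟩]
    exact (hlin.add (habs.const_mul ((β - α) / 2))).congr_deriv (by ring)

/-- The antiderivative `a + ∫_p^x (v - g(t/ε)) dt`, the only candidate for a calibration. -/
noncomputable def edgeCalibration (α β ε p a v x : ℝ) : ℝ :=
  a + v * (x - p) - ε * (gPrimitive α β (x / ε) - gPrimitive α β (p / ε))

lemma edgeCalibration_self (α β ε p a v : ℝ) : edgeCalibration α β ε p a v p = a := by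
  simp [edgeCalibration]

lemma ae_hasDerivAt_edgeCalibration (α β p a v : ℝ) {ε : ℝ} (hε : ε ≠ 0) :
    ∀ᵐ x, HasDerivAt (edgeCalibration α β ε p a v) (v - g α β (x / ε)) x := by
  have hS : (range fun m : ℤ => ε * ((m : ℝ) / 2 + 1/4)).Countable := countable_range _
  filter_upwards [hS.ae_notMem volume] with x hx
  have hxε : x / ε ∉ range fun m : ℤ => (m : ℝ) / 2 + 1/4 := by
    rintro ⟨m, hm⟩
    exact hx ⟨m, by simp only at hm ⊢; rw [hm]; field_simp⟩
  have hG := (hasDerivAt_gPrimitive α β hxε).comp x ((hasDerivAt_id x).div_const ε)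
  exact ((((hasDerivAt_id x).sub_const p).const_mul v).const_add a |>.sub
    ((hG.sub_const (gPrimitive α β (p / ε))).const_mul ε)).congr_deriv (by field_simp)

lemma lipschitzWith_edgeCalibration (α β p a v : ℝ) {ε : ℝ} (hε : ε ≠ 0) :
    LipschitzWith (‖v‖₊ + (‖(α + β) / 2‖₊ + ‖(β - α) / 2‖₊)) (edgeCalibration α β ε p a v) := by
  set L := ‖(α + β) / 2‖₊ + ‖(β - α) / 2‖₊
  refine LipschitzWith.of_dist_le_mul fun x y => ?_
  have hG := (lipschitzWith_gPrimitive α β).dist_le_mul (x / ε) (y / ε)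
  rw [Real.dist_eq, Real.dist_eq, ← sub_div, abs_div] at hG
  rw [Real.dist_eq, Real.dist_eq, NNReal.coe_add, coe_nnnorm, Real.norm_eq_abs]
  calc |edgeCalibration α β ε p a v x - edgeCalibration α β ε p a v y|
      = |v * (x - y) - ε * (gPrimitive α β (x / ε) - gPrimitive α β (y / ε))| := by
        unfold edgeCalibration; ring_nf
    _ ≤ |v| * |x - y| + |ε| * |gPrimitive α β (x / ε) - gPrimitive α β (y / ε)| := by
        rw [← abs_mul, ← abs_mul]; exact abs_sub _ _
    _ ≤ |v| * |x - y| + |ε| * (L * (|x - y| / |ε|)) := by gcongr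
    _ = (|v| + L) * |x - y| := by field_simp

theorem LipschitzOnWith.eqOn_of_ae_hasDerivAt {f h f' : ℝ → ℝ} {a b : ℝ} {Kf Kh : NNReal}
    (hf : LipschitzOnWith Kf f (Icc a b)) (hh : LipschitzOnWith Kh h (Icc a b))
    (hf' : ∀ᵐ x ∂volume.restrict (Icc a b), HasDerivAt f (f' x) x)
    (hh' : ∀ᵐ x ∂volume.restrict (Icc a b), HasDerivAt h (f' x) x)
    (ha : f a = h a) : EqOn f h (Icc a b) := by
  intro x hx
  have hab : uIcc a b = Icc a b := uIcc_of_le (hx.1.trans hx.2)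
  rw [← hab] at hf hh hf' hh' hx
  obtain ⟨C, hC⟩ := (hf.absolutelyContinuousOnInterval.sub
    hh.absolutelyContinuousOnInterval).const_of_ae_hasDerivAt_zero (by
      filter_upwards [(ae_restrict_iff' measurableSet_uIcc).1 hf',
        (ae_restrict_iff' measurableSet_uIcc).1 hh'] with y hfy hhy hy
      simpa using (hfy hy).sub (hhy hy))
  have hCa := hC a left_mem_uIcc
  have hCx := hC x hx
  simp only [Pi.sub_apply] at hCa hCx
  linarith

theorem exists_calibrates_iff {α β ε p q a b v : ℝ} (hε : ε ≠ 0) (hpq : p ≤ q) :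
    (∃ n, Calibrates α β ε p q a b v n) ↔ edgeCalibration α β ε p a v q = b ∧
      ∀ x ∈ Icc p q, edgeCalibration α β ε p a v x ∈ Icc (-1 : ℝ) 1 := by
  have hlip := lipschitzWith_edgeCalibration α β p a v hε
  have hder := ae_hasDerivAt_edgeCalibration α β p a v hε
  constructor
  · rintro ⟨n, ⟨K, hK⟩, hrange, hnp, hnq, hn'⟩
    have heq : EqOn n (edgeCalibration α β ε p a v) (Icc p q) :=
      hK.eqOn_of_ae_hasDerivAt hlip.lipschitzOnWith hn' (ae_restrict_of_ae hder)
        (hnp.trans (edgeCalibration_self ..).symm)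
    exact ⟨heq ⟨hpq, le_rfl⟩ ▸ hnq, fun x hx => heq hx ▸ hrange x hx⟩
  · rintro ⟨hq, hrange⟩
    exact ⟨_, ⟨_, hlip.lipschitzOnWith⟩, hrange, edgeCalibration_self .., hq,
      ae_restrict_of_ae hder⟩

lemma mul_triangleWave_div_eq {ε x : ℝ} (hε : 0 < ε) {m : ℤ}
    (hx : x ∈ Icc (ε * (m - 1/4)) (ε * (m + 3/4))) :
    ε * triangleWave (x / ε) = |x - ε * (m + 1/4)| := by
  have hxε : x / ε ∈ Icc ((m : ℝ) - 1/4) (m + 3/4) :=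
    ⟨(le_div_iff₀' hε).2 hx.1, (div_le_iff₀' hε).2 hx.2⟩
  rw [triangleWave_eq_of_mem_Icc hxε, ← abs_of_pos hε, ← abs_mul, abs_of_pos hε, mul_sub,
    mul_div_cancel₀ _ hε.ne']

lemma edgeCalibration_eq {α β ε p a v : ℝ} (hε : ε ≠ 0) (x : ℝ) :
    edgeCalibration α β ε p a v x = a + (v - (α + β) / 2) * (x - p)
      - (β - α) / 2 * (ε * triangleWave (x / ε) - ε * triangleWave (p / ε)) := by
  unfold edgeCalibration gPrimitive
  field_simp
  ring

lemma edgeCalibration_le_of_triangleWave_le {α β ε p a v x y : ℝ} (hε : 0 < ε) (hαβ : α ≤ β)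
    (hv : (α + β) / 2 ≤ v) (hxy : x ≤ y) (htw : triangleWave (y / ε) ≤ triangleWave (x / ε)) :
    edgeCalibration α β ε p a v x ≤ edgeCalibration α β ε p a v y := by
  rw [edgeCalibration_eq hε.ne', edgeCalibration_eq hε.ne']
  nlinarith [mul_nonneg (sub_nonneg.2 hv) (sub_nonneg.2 hxy),
    mul_nonneg (sub_nonneg.2 hαβ) (mul_nonneg hε.le (sub_nonneg.2 htw))]

lemma edgeCalibration_eq_of_mem_Icc {α β ε p a v x : ℝ} (hε : 0 < ε) {m : ℤ}
    (hp : p ∈ Icc (ε * (m - 1/4)) (ε * (m + 3/4))) (hx : x ∈ Icc (ε * (m - 1/4)) (ε * (m + 3/4))) :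
    edgeCalibration α β ε p a v x = a + (v - (α + β) / 2) * (x - p)
      - (β - α) / 2 * (|x - ε * (m + 1/4)| - |p - ε * (m + 1/4)|) := by
  rw [edgeCalibration_eq hε.ne', mul_triangleWave_div_eq hε hx, mul_triangleWave_div_eq hε hp]

lemma edgeCalibration_mul_add_three_quarters {α β ε p a v : ℝ} (hε : 0 < ε) {m : ℤ}
    (hp : p ∈ Icc (ε * (m - 1/4)) (ε * (m + 1/4))) :
    edgeCalibration α β ε p a v (ε * (m + 3/4))
      = a + (v - α) * (ε * (m + 1/4) - p) + (v - β) * (ε / 2) := by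
  rw [edgeCalibration_eq_of_mem_Icc hε ⟨hp.1, by linarith [hp.2]⟩ ⟨by linarith, le_rfl⟩,
    abs_of_nonneg (by linarith), abs_of_nonpos (by linarith [hp.2])]
  ring

lemma le_edgeCalibration_of_mem_cell {α β ε p a v x : ℝ} (hε : 0 < ε) (hαβ : α ≤ β)
    (hv : (α + β) / 2 ≤ v) {m : ℤ} (hp : p ∈ Icc (ε * (m - 1/4)) (ε * (m + 1/4)))
    (hx : x ∈ Icc p (ε * (m + 3/4))) (hend : a ≤ edgeCalibration α β ε p a v (ε * (m + 3/4))) :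
    a ≤ edgeCalibration α β ε p a v x := by
  rw [edgeCalibration_mul_add_three_quarters hε hp] at hend
  rw [edgeCalibration_eq_of_mem_Icc hε ⟨hp.1, by linarith [hp.2]⟩ ⟨by linarith [hx.1, hp.1], hx.2⟩,
    abs_of_nonpos (by linarith [hp.2] : p - ε * (m + 1/4) ≤ 0)]
  rcases le_total x (ε * (m + 1/4)) with hxA | hAx
  · rw [abs_of_nonpos (by linarith)]
    nlinarith [mul_nonneg (sub_nonneg.2 hv) (sub_nonneg.2 hx.1),
      mul_nonneg (sub_nonneg.2 hαβ) (sub_nonneg.2 hx.1)]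
  · -- the calibration is affine on `[ε (m + 1/4), ε (m + 3/4)]`, where it is `≥ a` at both ends
    rw [abs_of_nonneg (by linarith)]
    nlinarith [mul_nonneg (sub_nonneg.2 hx.2) (mul_nonneg (sub_nonneg.2 hv) (sub_nonneg.2 hp.2)),
      mul_nonneg (sub_nonneg.2 hx.2) (mul_nonneg (sub_nonneg.2 hαβ) (sub_nonneg.2 hp.2)),
      mul_nonneg (sub_nonneg.2 hAx) (sub_nonneg.2 hend)]

lemma edgeCalibration_mem_Icc_iff {α β ε p q v : ℝ} (hε : 0 < ε) (hαβ : α ≤ β)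
    (hv : (α + β) / 2 ≤ v) {m : ℤ} (hp : p ∈ Icc (ε * (m - 1/4)) (ε * (m + 1/4)))
    (hq : ε * (m + 3/4) ≤ q) (hqtw : triangleWave (q / ε) = 0)
    (hnq : edgeCalibration α β ε p (-1) v q = 1) :
    (∀ x ∈ Icc p q, edgeCalibration α β ε p (-1) v x ∈ Icc (-1 : ℝ) 1) ↔
      -1 ≤ edgeCalibration α β ε p (-1) v (ε * (m + 3/4)) := by
  have hpB : p ≤ ε * (m + 3/4) := by linarith [hp.2]
  have hBtw : triangleWave (ε * (m + 3/4) / ε) = 1/2 := by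
    rw [mul_div_cancel_left₀ _ hε.ne', triangleWave_eq_of_mem_Icc ⟨by linarith, le_rfl⟩]
    norm_num
  refine ⟨fun h => (h _ ⟨hpB, hq⟩).1, fun hend x hx => ⟨?_, ?_⟩⟩
  · rcases le_total x (ε * (m + 3/4)) with hxB | hBx
    · exact le_edgeCalibration_of_mem_cell hε hαβ hv hp ⟨hx.1, hxB⟩ hend
    · exact hend.trans (edgeCalibration_le_of_triangleWave_le hε hαβ hv hBx
        (hBtw ▸ triangleWave_le_half _))
  · exact (edgeCalibration_le_of_triangleWave_le hε hαβ hv hx.2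
      (hqtw ▸ triangleWave_nonneg _)).trans_eq hnq

lemma sigmaStar_le_iff {α β ε σ lstar ℓ v : ℝ} (hαβ : α < β) (hε : 0 < ε) (hσ : 0 ≤ σ)
    (hlstar : ε / 2 ≤ lstar) (hℓ : ℓ = σ + lstar + ε / 2)
    (hv : (v - (α + β) / 2) * ℓ = 2 - (β - α) / 2 * σ) :
    ε / 2 * ((β - α) * (lstar + ε / 2) - 4) / ((β - α) * (lstar - ε / 2) + 4) ≤ σ ↔
      0 ≤ (v - α) * σ + (v - β) * (ε / 2) := by
  have hden : 0 < (β - α) * (lstar - ε / 2) + 4 := by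
    nlinarith [mul_nonneg (sub_nonneg.2 hαβ.le) (sub_nonneg.2 hlstar)]
  have key : 2 * ℓ * ((v - α) * σ + (v - β) * (ε / 2))
      = σ * ((β - α) * (lstar - ε / 2) + 4) - ε / 2 * ((β - α) * (lstar + ε / 2) - 4) := by
    linear_combination (2 * σ + ε) * hv + (β - α) * (σ - ε / 2) * hℓ
  rw [div_le_iff₀ hden, ← sub_nonneg, ← key]
  exact mul_nonneg_iff_of_pos_left (by linarith)

theorem stmt11_general (α β ε p q : ℝ) (k₁ k : ℤ)
    (hε0 : 0 < ε) (hε : ε < 8 / (β - α))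
    (hp1 : ε * (k₁ - 1/4) < p) (hp2 : p < ε * (k₁ + 1/4))
    (hq : q = ε * (k + 1/4)) (hqgt : ε * (k₁ + 3/4) < q)
    (σ lstar σstar v : ℝ)
    (hσ : σ = ε * (k₁ + 1/4) - p)
    (hlstar : lstar = q - ε * (k₁ + 3/4))
    (hσstar : σstar = ε / 2 * ((β - α) * (lstar + ε / 2) - 4)
      / ((β - α) * (lstar - ε / 2) + 4))
    (hv : v = 2 / (q - p) + (α + β) / 2 - (β - α) / (2 * (q - p)) * σ) :
    (∃ n : ℝ → ℝ, Calibrates α β ε p q (-1) 1 v n) ↔ σstar ≤ σ := by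
  have hαβ : α < β := sub_pos.1 ((div_pos_iff.1 (hε0.trans hε)).resolve_right (by norm_num)).2
  have hp : p ∈ Icc (ε * (k₁ - 1/4)) (ε * (k₁ + 1/4)) := ⟨hp1.le, hp2.le⟩
  have hlstar_ge : ε / 2 ≤ lstar := by
    have hk : k₁ < k := by exact_mod_cast (by nlinarith : (k₁ : ℝ) < k)
    have : ε * (k₁ + 1) ≤ ε * k := by gcongr; exact_mod_cast hk
    linarith
  have hℓ : q - p = σ + lstar + ε / 2 := by linarith
  have hvℓ : (v - (α + β) / 2) * (q - p) = 2 - (β - α) / 2 * σ := by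
    rw [hv]; field_simp [(by linarith : q - p ≠ 0)]; ring
  have hvα : (α + β) / 2 ≤ v := by
    have hεβα : ε * (β - α) < 8 := (lt_div_iff₀ (sub_pos.2 hαβ)).1 hε
    have : 0 < (v - (α + β) / 2) * (q - p) := by rw [hvℓ]; nlinarith
    linarith [pos_of_mul_pos_left this (by linarith)]
  have hqtw : triangleWave (q / ε) = 0 := by
    rw [hq, mul_div_cancel_left₀ _ hε0.ne',
      triangleWave_eq_of_mem_Icc (m := k) ⟨by linarith, by linarith⟩, sub_self, abs_zero]
  have hnq : edgeCalibration α β ε p (-1) v q = 1 := by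
    rw [edgeCalibration_eq hε0.ne', hqtw, mul_triangleWave_div_eq hε0 ⟨hp1.le, by linarith⟩,
      abs_of_nonpos (by linarith)]
    linear_combination hvℓ - (β - α) / 2 * hσ
  rw [exists_calibrates_iff hε0.ne' (by linarith), and_iff_right hnq,
    edgeCalibration_mem_Icc_iff hε0 hαβ.le hvα hp hqgt.le hqtw hnq,
    edgeCalibration_mul_add_three_quarters hε0 hp, ← hσ, hσstar,
    sigmaStar_le_iff hαβ hε0 (by linarith) hlstar_ge hℓ hvℓ, add_assoc]
  exact le_add_iff_nonneg_right _

theorem stmt11 (α β ε p q : ℝ) (k₁ k : ℤ) (hα : α < 0) (hβ : 0 < β)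
    (hε0 : 0 < ε) (hε : ε < 8 / (β - α))
    (hp1 : ε * (k₁ - 1/4) < p) (hp2 : p < ε * (k₁ + 1/4))
    (hq : q = ε * (k + 1/4)) (hqgt : ε * (k₁ + 3/4) < q)
    (σ lstar σstar v : ℝ)
    (hσ : σ = ε * (k₁ + 1/4) - p)
    (hlstar : lstar = q - ε * (k₁ + 3/4))
    (hσstar : σstar = ε / 2 * ((β - α) * (lstar + ε / 2) - 4)
      / ((β - α) * (lstar - ε / 2) + 4))
    (hv : v = 2 / (q - p) + (α + β) / 2 - (β - α) / (2 * (q - p)) * σ)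
    (hcond : 4 < (β - α) * (lstar + ε / 2 + 2 * σ)) :
    (∃ n : ℝ → ℝ, Calibrates α β ε p q (-1) 1 v n) ↔ σstar ≤ σ :=
  stmt11_general α β ε p q k₁ k hε0 hε hp1 hp2 hq hqgt σ lstar σstar v hσ hlstar hσstar hv
end

section
/- Let γ ∈ ℝ, let I ⊆ ℝ be an interval, and let ℓ₁, ℓ₂ : I → (0, ∞) be differentiable functions satisfying ℓ₁'(t) = −4/ℓ₂(t) − 2γ and ℓ₂'(t) = −4/ℓ₁(t) − 2γ for all t ∈ I. Then the function t ↦ 4(log ℓ₂(t) − log ℓ₁(t)) + 2γ(ℓ₂(t) − ℓ₁(t)) is constant on I. -/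
theorem stmt13 (γ : ℝ) (I : Set ℝ) (hI : I.OrdConnected) (l₁ l₂ : ℝ → ℝ)
    (hpos1 : ∀ t ∈ I, 0 < l₁ t) (hpos2 : ∀ t ∈ I, 0 < l₂ t)
    (hd1 : ∀ t ∈ I, HasDerivAt l₁ (-4 / l₂ t - 2 * γ) t)
    (hd2 : ∀ t ∈ I, HasDerivAt l₂ (-4 / l₁ t - 2 * γ) t) :
    ∀ s ∈ I, ∀ t ∈ I,
      4 * (Real.log (l₂ s) - Real.log (l₁ s)) + 2 * γ * (l₂ s - l₁ s) =
      4 * (Real.log (l₂ t) - Real.log (l₁ t)) + 2 * γ * (l₂ t - l₁ t) := by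
  set U : ℝ → ℝ := fun t =>
    4 * (Real.log (l₂ t) - Real.log (l₁ t)) + 2 * γ * (l₂ t - l₁ t) with hU
  have hderiv : ∀ t ∈ I, HasDerivAt U 0 t := by
    intro t ht
    have h1 := hd1 t ht
    have h2 := hd2 t ht
    have hp1 := (hpos1 t ht).ne'
    have hp2 := (hpos2 t ht).ne'
    have : HasDerivAt U
        (4 * (((-4 / l₁ t - 2 * γ) / l₂ t) - ((-4 / l₂ t - 2 * γ) / l₁ t)) +
          2 * γ * ((-4 / l₁ t - 2 * γ) - (-4 / l₂ t - 2 * γ))) t :=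
      (((h2.log hp2).sub (h1.log hp1)).const_mul 4).add
        ((h2.sub h1).const_mul (2 * γ))
    convert this using 1
    field_simp
    ring
  have hconv : Convex ℝ I := hI.convex
  intro s hs t ht
  have key := hconv.norm_image_sub_le_of_norm_hasDerivWithin_le
    (fun x hx => (hderiv x hx).hasDerivWithinAt)
    (C := 0) (fun x hx => by simp) ht hs
  have : ‖U s - U t‖ ≤ 0 := by simpa using key
  have := norm_le_zero_iff.mp this
  exact sub_eq_zero.mp this
end

section
/- Let α < 0 < β, 0 < ε < 8/(β−α), N ∈ ℕ, x_N := (N + 1/4)ε, δ ∈ (ε/2, ε), and v_δ := ((ε/2)β + (δ − ε/2)α)/δ. Then the function n(x) := 1 + v_δ(x − x_N) − ∫_{x_N}^x g(s/ε) ds satisfies n(x_N + δ) = 1 and −1 ≤ n(x) ≤ 1 for every x ∈ [x_N, x_N + δ]; in particular the edge [x_N, x_N + δ] with endpoint values n(x_N) = n(x_N + δ) = 1 (a zero-curvature horizontal edge with left endpoint on the interface ε(1/4 + ℤ)) is calibrable with velocity v_δ. -/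
open MeasureTheory Set

/-! Starting at the interface `p = (N + 1/4) ε`, the forcing `g(·/ε)` equals `β` on
`(p, p + ε/2)` and `α` on `(p + ε/2, p + ε)`. Hence on `[p, p + ε]` the field `n` is `1` plus the
maximum of two lines crossing at `p + ε/2`: one of slope `v - β ≤ 0` through `n(p) = 1`, and one of
slope `v - α ≥ 0`, which returns to `1` exactly at `p + δ` by the choice of `v`. Such a V-shaped
function is Lipschitz and has the right derivative away from its kink. It is at most `1` on
`[p, p + δ]`, and its minimum `1 - (β - v) ε / 2` is at least `-1` because `ε (β - α) < 8` and
`δ < ε`. -/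

section IntervalIntegral

variable {E : Type*} [NormedAddCommGroup E] {f : ℝ → E} {a b : ℝ} {C : E}

theorem intervalIntegrable_of_eqOn_Ioo (hab : a ≤ b) (h : EqOn f (fun _ => C) (Ioo a b)) :
    IntervalIntegrable f volume a b := by
  rw [intervalIntegrable_iff_integrableOn_Ioo_of_le hab]
  exact (integrableOn_const measure_Ioo_lt_top.ne).congr_fun h.symm measurableSet_Ioo

theorem intervalIntegral_eq_of_eqOn_Ioo [NormedSpace ℝ E] [CompleteSpace E] (hab : a ≤ b)
    (h : EqOn f (fun _ => C) (Ioo a b)) :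
    ∫ x in a..b, f x = (b - a) • C := by
  rw [intervalIntegral.integral_of_le hab, integral_Ioc_eq_integral_Ioo,
    setIntegral_congr_fun measurableSet_Ioo h, setIntegral_const, Real.volume_real_Ioo_of_le hab]

end IntervalIntegral

theorem ae_restrict_Icc_mem_Ioo (a b : ℝ) : ∀ᵐ x ∂volume.restrict (Icc a b), x ∈ Ioo a b := by
  rw [← restrict_Ioo_eq_restrict_Icc]
  exact ae_restrict_mem measurableSet_Ioo

theorem Calibrates.congr {α β ε p q a b v : ℝ} {n n' : ℝ → ℝ}
    (h : Calibrates α β ε p q a b v n) (hpq : p ≤ q) (heq : EqOn n n' (Icc p q)) :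
    Calibrates α β ε p q a b v n' := by
  obtain ⟨⟨K, hK⟩, hbound, hp, hq, hderiv⟩ := h
  refine ⟨⟨K, fun x hx y hy => heq hx ▸ heq hy ▸ hK hx hy⟩, fun x hx => heq hx ▸ hbound x hx,
    heq (left_mem_Icc.2 hpq) ▸ hp, heq (right_mem_Icc.2 hpq) ▸ hq, ?_⟩
  filter_upwards [hderiv, ae_restrict_Icc_mem_Ioo p q] with x hx hxI
  exact hx.congr_of_eventuallyEq (heq.symm.eventuallyEq_of_mem (Icc_mem_nhds hxI.1 hxI.2))

theorem g_of_abs_sub_intCast_le (α β : ℝ) {t : ℝ} {m : ℤ} (h : |t - m| ≤ 1 / 4) :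
    g α β t = α :=
  if_pos ((round_le t m).trans h)

theorem g_of_mem_Ioo (α β : ℝ) {t : ℝ} {m : ℤ} (h : t ∈ Ioo ((m : ℝ) + 1 / 4) (m + 3 / 4)) :
    g α β t = β := by
  refine if_neg (not_le.2 ?_)
  rcases le_or_gt (round t) m with hk | hk
  · have : (round t : ℝ) ≤ m := by exact_mod_cast hk
    rw [abs_of_pos (by linarith [h.1])]
    linarith [h.1]
  · have : (m : ℝ) + 1 ≤ round t := by exact_mod_cast hk
    rw [abs_of_neg (by linarith [h.2])]
    linarith [h.2]

section Edge

variable {α β ε v p : ℝ}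

theorem g_div_eqOn_Ioo_left (hε : 0 < ε) {m : ℤ} (hp : p = (m + 1 / 4) * ε) :
    EqOn (fun s => g α β (s / ε)) (fun _ => β) (Ioo p (p + ε / 2)) := fun s hs =>
  g_of_mem_Ioo α β (m := m)
    ⟨(lt_div_iff₀ hε).2 (by linarith [hs.1]), (div_lt_iff₀ hε).2 (by linarith [hs.2])⟩

theorem g_div_eqOn_Ioo_right (hε : 0 < ε) {m : ℤ} (hp : p = (m + 1 / 4) * ε) :
    EqOn (fun s => g α β (s / ε)) (fun _ => α) (Ioo (p + ε / 2) (p + ε)) := by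
  intro s hs
  apply g_of_abs_sub_intCast_le α β (m := m + 1)
  rw [abs_le]
  push_cast
  constructor
  · linarith [(lt_div_iff₀ hε).2 (show ((m : ℝ) + 3 / 4) * ε < s by linarith [hs.1])]
  · linarith [(div_lt_iff₀ hε).2 (show s < ((m : ℝ) + 5 / 4) * ε by linarith [hs.2])]

theorem integral_g_div_eq_min (hαβ : α ≤ β) (hε : 0 < ε) {m : ℤ} (hp : p = (m + 1 / 4) * ε)
    {x : ℝ} (hx : x ∈ Icc p (p + ε)) :
    ∫ s in p..x, g α β (s / ε) = min (β * (x - p)) (α * (x - p) + (β - α) * (ε / 2)) := by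
  have hl := g_div_eqOn_Ioo_left (α := α) (β := β) hε hp
  rcases le_or_gt x (p + ε / 2) with hxc | hxc
  · rw [intervalIntegral_eq_of_eqOn_Ioo hx.1 (hl.mono (Ioo_subset_Ioo_right hxc)), smul_eq_mul,
      min_eq_left (by nlinarith)]
    ring
  · have hr := (g_div_eqOn_Ioo_right (α := α) (β := β) hε hp).mono (Ioo_subset_Ioo_right hx.2)
    have hpc : p ≤ p + ε / 2 := by linarith
    rw [← intervalIntegral.integral_add_adjacent_intervals (intervalIntegrable_of_eqOn_Ioo hpc hl)
      (intervalIntegrable_of_eqOn_Ioo hxc.le hr), intervalIntegral_eq_of_eqOn_Ioo hpc hl,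
      intervalIntegral_eq_of_eqOn_Ioo hxc.le hr, min_eq_right (by nlinarith), smul_eq_mul,
      smul_eq_mul]
    ring

noncomputable def calibrationProfile (α β ε v p x : ℝ) : ℝ :=
  1 + max ((v - β) * (x - p)) ((v - α) * (x - p) - (β - α) * (ε / 2))

theorem calibrationProfile_eq_sub_integral (hαβ : α ≤ β) (hε : 0 < ε) {m : ℤ}
    (hp : p = (m + 1 / 4) * ε) {x : ℝ} (hx : x ∈ Icc p (p + ε)) :
    calibrationProfile α β ε v p x = 1 + v * (x - p) - ∫ s in p..x, g α β (s / ε) := by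
  rw [integral_g_div_eq_min hαβ hε hp hx, add_sub_assoc, ← max_sub_sub_left, calibrationProfile]
  congr 2 <;> ring

theorem lipschitzWith_calibrationProfile (α β ε v p : ℝ) :
    LipschitzWith (max ‖v - β‖₊ ‖v - α‖₊) (calibrationProfile α β ε v p) := by
  refine LipschitzWith.of_dist_le_mul fun x y => ?_
  simp only [calibrationProfile, Real.dist_eq, NNReal.coe_max, coe_nnnorm, Real.norm_eq_abs,
    add_sub_add_left_eq_sub]
  refine (abs_max_sub_max_le_max _ _ _ _).trans ?_
  rw [max_mul_of_nonneg _ _ (abs_nonneg _), ← abs_mul, ← abs_mul]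
  exact max_le_max (by ring_nf; rfl) (by ring_nf; rfl)

theorem hasDerivAt_calibrationProfile_of_lt (hαβ : α ≤ β) {x : ℝ} (hx : x < p + ε / 2) :
    HasDerivAt (calibrationProfile α β ε v p) (v - β) x := by
  have hline : HasDerivAt (fun y => 1 + (v - β) * (y - p)) (v - β) x := by
    simpa using ((hasDerivAt_id x).sub_const p).const_mul (v - β) |>.const_add 1
  refine hline.congr_of_eventuallyEq ?_
  filter_upwards [Iio_mem_nhds hx] with y hy
  rw [calibrationProfile, max_eq_left (by nlinarith [hy.out])]

theorem hasDerivAt_calibrationProfile_of_gt (hαβ : α ≤ β) {x : ℝ} (hx : p + ε / 2 < x) :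
    HasDerivAt (calibrationProfile α β ε v p) (v - α) x := by
  have hline : HasDerivAt (fun y => 1 + ((v - α) * (y - p) - (β - α) * (ε / 2))) (v - α) x := by
    simpa using
      (((hasDerivAt_id x).sub_const p).const_mul (v - α)).sub_const ((β - α) * (ε / 2))
        |>.const_add 1
  refine hline.congr_of_eventuallyEq ?_
  filter_upwards [Ioi_mem_nhds hx] with y hy
  rw [calibrationProfile, max_eq_right (by nlinarith [hy.out])]

theorem neg_one_le_calibrationProfile (hαv : α ≤ v) (hvβ : v ≤ β)
    (hdepth : (β - v) * (ε / 2) ≤ 2) (x : ℝ) : -1 ≤ calibrationProfile α β ε v p x := by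
  rw [calibrationProfile]
  rcases le_or_gt x (p + ε / 2) with hx | hx
  · nlinarith [le_max_left ((v - β) * (x - p)) ((v - α) * (x - p) - (β - α) * (ε / 2))]
  · nlinarith [le_max_right ((v - β) * (x - p)) ((v - α) * (x - p) - (β - α) * (ε / 2))]

variable {δ : ℝ}

theorem calibrationProfile_le_one (hαv : α ≤ v) (hvβ : v ≤ β)
    (hv : (v - α) * δ = (β - α) * (ε / 2)) {x : ℝ} (hx : x ∈ Icc p (p + δ)) :
    calibrationProfile α β ε v p x ≤ 1 := by
  rw [calibrationProfile, add_le_iff_nonpos_right, max_le_iff]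
  constructor <;> nlinarith [hx.1, hx.2]

theorem calibrates_calibrationProfile (hαβ : α ≤ β) (hε : 0 < ε) {m : ℤ}
    (hp : p = (m + 1 / 4) * ε) (hδ : ε / 2 ≤ δ) (hδε : δ ≤ ε)
    (hv : (v - α) * δ = (β - α) * (ε / 2)) (hdepth : (β - v) * (ε / 2) ≤ 2) :
    Calibrates α β ε p (p + δ) 1 1 v (calibrationProfile α β ε v p) := by
  have hαv : α ≤ v := by nlinarith
  have hvβ : v ≤ β := by nlinarith
  refine ⟨⟨_, (lipschitzWith_calibrationProfile α β ε v p).lipschitzOnWith⟩,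
    fun x hx => ⟨neg_one_le_calibrationProfile hαv hvβ hdepth x,
      calibrationProfile_le_one hαv hvβ hv hx⟩, ?_, ?_, ?_⟩
  · rw [calibrationProfile, sub_self, mul_zero, mul_zero, zero_sub, max_eq_left (by nlinarith)]
    norm_num
  · rw [calibrationProfile, add_sub_cancel_left, hv, sub_self, max_eq_right (by nlinarith)]
    norm_num
  filter_upwards [ae_restrict_Icc_mem_Ioo p (p + δ), ae_restrict_of_ae (volume.ae_ne (p + ε / 2))]
    with x ⟨hpx, hxq⟩ hxc
  rcases hxc.lt_or_gt with hxc | hxc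
  · rw [show g α β (x / ε) = β from g_div_eqOn_Ioo_left hε hp ⟨hpx, hxc⟩]
    exact hasDerivAt_calibrationProfile_of_lt hαβ hxc
  · rw [show g α β (x / ε) = α from g_div_eqOn_Ioo_right hε hp ⟨hxc, by linarith⟩]
    exact hasDerivAt_calibrationProfile_of_gt hαβ hxc

end Edge

theorem stmt16 (α β ε δ v xN : ℝ) (N : ℕ) (hα : α < 0) (hβ : 0 < β)
    (hε0 : 0 < ε) (hε : ε < 8 / (β - α))
    (hxN : xN = (N + 1/4) * ε) (hδ1 : ε / 2 < δ) (hδ2 : δ < ε)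
    (hv : v = (ε / 2 * β + (δ - ε / 2) * α) / δ)
    (n : ℝ → ℝ) (hn : n = fun x => 1 + v * (x - xN) - ∫ s in xN..x, g α β (s / ε)) :
    n (xN + δ) = 1 ∧ (∀ x ∈ Icc xN (xN + δ), -1 ≤ n x ∧ n x ≤ 1) ∧
    Calibrates α β ε xN (xN + δ) 1 1 v n := by
  have hαβ : α < β := hα.trans hβ
  have hδ : 0 < δ := by linarith
  have hεβα : ε * (β - α) < 8 := (lt_div_iff₀ (by linarith)).1 hε
  have hvδ : (v - α) * δ = (β - α) * (ε / 2) := by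
    rw [hv]
    field_simp
    ring
  have hdepth : (β - v) * (ε / 2) ≤ 2 := by
    nlinarith [mul_pos (sub_pos.2 hδ2) (mul_pos hε0 (sub_pos.2 hαβ)),
      mul_pos hδ (sub_pos.2 hεβα)]
  have hp : xN = ((N : ℤ) + 1 / 4) * ε := by simpa using hxN
  subst hn
  have hcal := (calibrates_calibrationProfile hαβ.le hε0 hp hδ1.le hδ2.le hvδ hdepth).congr
    (by linarith) fun x hx =>
      calibrationProfile_eq_sub_integral hαβ.le hε0 hp ⟨hx.1, hx.2.trans (by linarith)⟩
  exact ⟨hcal.2.2.2.1, hcal.2.1, hcal⟩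
end
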